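/- (Equation (18)) For all n, k ∈ ℕ with k ≤ n, the fermionic p-adic q-integral of x ↦ B_{k,n}(x,q) exists and ∫_{ℤ_p} B_{k,n}(x,q) dμ_{−q}(x) = C(n,k)·Σ_{l=0}^{n−k} C(n−k,l)·(−1)^l·ξ_{k+l,q}. -/

import Mathlib

/-!
Since `[1 - x]_{1/q} = 1 - [x]_q`, expanding binomially reduces `B_{k,n}(x,q)` to a linear
combination of the powers `[x]_q^m`, and expanding once more to the functions `x ↦ q^{jx}`.
For these the Riemann sums are odd-length geometric sums,
`(1 + q)/(1 + q^{p^N}) · (1 + (q^{p^N})^{j+1})/(1 + q^{j+1})`, which tend to `(1 + q)/(1 + q^{j+1})`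
because `q ≡ 1 mod p` forces `q^{p^N} ≡ 1 mod p^{N+1}`. Oddness of `p` is what makes the sums
odd-length and keeps `1 + q^{j+1} ≡ 2 mod p` a unit.
-/

open Finset Filter

/-- `[a]_q = (1 - q^a)/(1 - q)` for `a : ℤ`. -/
noncomputable def qnum {p : ℕ} [Fact p.Prime] (q : ℚ_[p]) (a : ℤ) : ℚ_[p] :=
  (1 - q ^ a) / (1 - q)

/-- Kim's q-Euler polynomial `ξ_{n,q}(x)` (closed form). -/
noncomputable def xi {p : ℕ} [Fact p.Prime] (q : ℚ_[p]) (n : ℕ) (x : ℤ) : ℚ_[p] :=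
  ((1 + q) / (1 - q) ^ n) *
    ∑ l ∈ Finset.range (n + 1),
      (n.choose l : ℚ_[p]) * (-1) ^ l * q ^ ((l : ℤ) * x) / (1 + q ^ (l + 1))

/-- The fermionic p-adic `r`-integral statement:
`∫_{ℤ_p} g dμ_{-r} = L` means the Riemann-type sums
`(1/[p^N]_{-r}) · Σ_{x=0}^{p^N-1} g(x) (-r)^x` converge to `L`. -/
def fermionicIntegral (p : ℕ) [Fact p.Prime] (r : ℚ_[p]) (g : ℕ → ℚ_[p]) (L : ℚ_[p]) : Prop :=
  Filter.Tendsto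
    (fun N : ℕ => ((1 + r) / (1 - (-r) ^ (p ^ N))) * ∑ x ∈ Finset.range (p ^ N), g x * (-r) ^ x)
    Filter.atTop (nhds L)

/-- The q-Bernstein polynomial `B_{k,n}(x,q) = C(n,k) [x]_q^k [1-x]_{1/q}^{n-k}`. -/
noncomputable def bern {p : ℕ} [Fact p.Prime] (q : ℚ_[p]) (k n : ℕ) (x : ℤ) : ℚ_[p] :=
  (n.choose k : ℚ_[p]) * (qnum q x) ^ k * (qnum q⁻¹ (1 - x)) ^ (n - k)

open Topology

variable {p : ℕ} [Fact p.Prime]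

lemma one_sub_pow_eq_sum {R : Type*} [CommRing R] (a : R) (n : ℕ) :
    (1 - a) ^ n = ∑ j ∈ range (n + 1), (n.choose j : R) * (-1) ^ j * a ^ j := by
  rw [sub_eq_neg_add, add_pow]
  refine sum_congr rfl fun j _ => ?_
  rw [neg_pow, one_pow]
  ring

lemma geom_sum_neg_of_odd {K : Type*} [Field K] {a : K} (ha : 1 + a ≠ 0) {M : ℕ} (hM : Odd M) :
    ∑ x ∈ range M, (-a) ^ x = (1 + a ^ M) / (1 + a) := by
  have ha' : -a ≠ 1 := fun h => ha (by linear_combination -h)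
  have ha'' : -a - 1 ≠ 0 := sub_ne_zero.2 ha'
  rw [geom_sum_eq ha', hM.neg_pow, div_eq_div_iff ha'' ha]
  ring

namespace PadicInt

lemma norm_pow_prime_pow_sub_one_le {u : ℤ_[p]} (hu : ‖u - 1‖ < 1) (N : ℕ) :
    ‖u ^ p ^ N - 1‖ ≤ (p : ℝ) ^ (-(N + 1 : ℕ) : ℤ) := by
  rw [norm_le_pow_iff_mem_span_pow, Ideal.mem_span_singleton]
  simpa using dvd_sub_pow_of_dvd_sub ((norm_lt_one_iff_dvd _).1 hu) N

lemma norm_pow_sub_one_lt_one {u : ℤ_[p]} (hu : ‖u - 1‖ < 1) (m : ℕ) : ‖u ^ m - 1‖ < 1 := by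
  rw [norm_lt_one_iff_dvd] at hu ⊢
  exact hu.trans (sub_one_dvd_pow_sub_one u m)

end PadicInt

namespace Padic

variable {q : ℚ_[p]}

lemma exists_padicInt_of_norm_one_sub_lt_one (hq : ‖1 - q‖ < 1) :
    ∃ u : ℤ_[p], ‖u - 1‖ < 1 ∧ (u : ℚ_[p]) = q := by
  have hle : ‖q‖ ≤ 1 := by
    calc ‖q‖ = ‖1 + (q - 1)‖ := by rw [add_sub_cancel]
      _ ≤ max ‖(1 : ℚ_[p])‖ ‖q - 1‖ := nonarchimedean _ _
      _ ≤ 1 := by rw [norm_one, norm_sub_rev]; exact max_le le_rfl hq.le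
  refine ⟨⟨q, hle⟩, ?_, rfl⟩
  show ‖q - 1‖ < 1
  rwa [norm_sub_rev]

lemma tendsto_pow_prime_pow_nhds_one (hq : ‖1 - q‖ < 1) :
    Tendsto (fun N : ℕ => q ^ p ^ N) atTop (𝓝 1) := by
  obtain ⟨u, hu, rfl⟩ := exists_padicInt_of_norm_one_sub_lt_one hq
  have hp : (1 : ℝ) < p := mod_cast (Fact.out : p.Prime).one_lt
  rw [tendsto_iff_norm_sub_tendsto_zero]
  refine squeeze_zero (fun _ => norm_nonneg _)
    (fun N => PadicInt.norm_pow_prime_pow_sub_one_le hu N) ?_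
  simp only [zpow_neg, zpow_natCast]
  exact tendsto_inv_atTop_zero.comp
    ((tendsto_pow_atTop_atTop_of_one_lt hp).comp (tendsto_add_atTop_nat 1))

lemma one_add_pow_ne_zero (hp : Odd p) (hq : ‖1 - q‖ < 1) (m : ℕ) : 1 + q ^ m ≠ 0 := by
  obtain ⟨u, hu, rfl⟩ := exists_padicInt_of_norm_one_sub_lt_one hq
  intro h
  have h2 : ‖(2 : ℚ_[p])‖ = 1 := mod_cast norm_natCast_eq_one_iff.2 (Nat.coprime_two_right.2 hp)
  have hlt : ‖(u : ℚ_[p]) ^ m - 1‖ < 1 := PadicInt.norm_pow_sub_one_lt_one hu m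
  rw [show (u : ℚ_[p]) ^ m - 1 = -2 by linear_combination h, norm_neg, h2] at hlt
  exact lt_irrefl _ hlt

end Padic

section FermionicIntegral

variable {q r : ℚ_[p]}

lemma fermionicIntegral_sum_mul {ι : Type*} (s : Finset ι) (c : ι → ℚ_[p]) {g : ι → ℕ → ℚ_[p]}
    {L : ι → ℚ_[p]} (h : ∀ i ∈ s, fermionicIntegral p r (g i) (L i)) :
    fermionicIntegral p r (fun x => ∑ i ∈ s, c i * g i x) (∑ i ∈ s, c i * L i) := by
  refine (tendsto_finsetSum s fun i hi => (h i hi).const_mul (c i)).congr fun N => ?_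
  simp only [mul_sum, sum_mul]
  rw [sum_comm]
  exact sum_congr rfl fun _ _ => sum_congr rfl fun _ _ => by ring

lemma fermionicIntegral_pow_mul (hp : Odd p) (hq : ‖1 - q‖ < 1) (m : ℕ) :
    fermionicIntegral p q (fun x => q ^ (m * x)) ((1 + q) / (1 + q ^ (m + 1))) := by
  have hm : 1 + q ^ (m + 1) ≠ 0 := Padic.one_add_pow_ne_zero hp hq (m + 1)
  set F : ℚ_[p] → ℚ_[p] := fun u => (1 + q) / (1 + u) * ((1 + u ^ (m + 1)) / (1 + q ^ (m + 1)))
  have hsum (N : ℕ) : (1 + q) / (1 - (-q) ^ p ^ N) * ∑ x ∈ range (p ^ N), q ^ (m * x) * (-q) ^ x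
      = F (q ^ p ^ N) := by
    have hterm (x : ℕ) : q ^ (m * x) * (-q) ^ x = (-q ^ (m + 1)) ^ x := by
      rw [neg_pow, neg_pow (q ^ (m + 1)), ← pow_mul, add_one_mul, pow_add]
      ring
    simp only [hterm, geom_sum_neg_of_odd hm hp.pow, (hp.pow (n := N)).neg_pow, sub_neg_eq_add,
      F, pow_right_comm q (m + 1)]
  have hF : ContinuousAt F 1 := by
    refine (continuousAt_const.div (by fun_prop) ?_).mul (by fun_prop)
    norm_num
  have hF1 : F 1 = (1 + q) / (1 + q ^ (m + 1)) := by
    simp only [F, one_pow]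
    field_simp
  rw [fermionicIntegral, funext hsum, ← hF1]
  exact hF.tendsto.comp (Padic.tendsto_pow_prime_pow_nhds_one hq)

lemma fermionicIntegral_qnum_pow (hp : Odd p) (hq : ‖1 - q‖ < 1) (m : ℕ) :
    fermionicIntegral p q (fun x => qnum q x ^ m) (xi q m 0) := by
  have hexpand (x : ℕ) : qnum q x ^ m
      = ∑ j ∈ range (m + 1), ((m.choose j : ℚ_[p]) * (-1) ^ j / (1 - q) ^ m) * q ^ (j * x) := by
    rw [qnum, zpow_natCast, div_pow, one_sub_pow_eq_sum, sum_div]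
    exact sum_congr rfl fun j _ => by rw [pow_mul']; ring
  have hxi : xi q m 0 = ∑ j ∈ range (m + 1),
      ((m.choose j : ℚ_[p]) * (-1) ^ j / (1 - q) ^ m) * ((1 + q) / (1 + q ^ (j + 1))) := by
    rw [xi, mul_sum]
    exact sum_congr rfl fun j _ => by rw [mul_zero, zpow_zero]; ring
  rw [funext hexpand, hxi]
  exact fermionicIntegral_sum_mul _ _ fun j _ => fermionicIntegral_pow_mul hp hq j

end FermionicIntegral

lemma qnum_inv_one_sub {q : ℚ_[p]} (hq0 : q ≠ 0) (hq1 : q ≠ 1) (x : ℤ) :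
    qnum q⁻¹ (1 - x) = 1 - qnum q x := by
  have h1q' : 1 - q⁻¹ ≠ 0 := sub_ne_zero.2 (by simpa [eq_comm] using hq1)
  rw [qnum, qnum, inv_zpow, ← zpow_neg, neg_sub, zpow_sub₀ hq0, zpow_one, div_eq_iff h1q']
  field_simp
  ring

theorem stmt11_general (p : ℕ) [Fact p.Prime] (hp : Odd p) (q : ℚ_[p]) (hq : ‖1 - q‖ < 1) (hq1 : q ≠ 1) (n k : ℕ) :
    fermionicIntegral p q (fun x => bern q k n x)
      ((n.choose k : ℚ_[p]) *
        ∑ l ∈ Finset.range (n - k + 1), ((n - k).choose l : ℚ_[p]) * (-1) ^ l * xi q (k + l) 0) := by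
  have hq0 : q ≠ 0 := by
    rintro rfl
    simp at hq
  have hexpand (x : ℕ) : bern q k n x = ∑ l ∈ range (n - k + 1),
      ((n.choose k : ℚ_[p]) * ((n - k).choose l : ℚ_[p]) * (-1) ^ l) * qnum q x ^ (k + l) := by
    rw [bern, qnum_inv_one_sub hq0 hq1, one_sub_pow_eq_sum, mul_sum]
    exact sum_congr rfl fun l _ => by ring
  rw [funext hexpand, mul_sum]
  convert fermionicIntegral_sum_mul _ _ fun l _ => fermionicIntegral_qnum_pow hp hq (k + l)
    using 2 with l
  ring

theorem stmt11 (p : ℕ) [Fact p.Prime] (hp : Odd p) (q : ℚ_[p]) (hq : ‖1 - q‖ < 1) (hq1 : q ≠ 1) (n k : ℕ) (hkn : k ≤ n) :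
    fermionicIntegral p q (fun x => bern q k n x)
      ((n.choose k : ℚ_[p]) *
        ∑ l ∈ Finset.range (n - k + 1), ((n - k).choose l : ℚ_[p]) * (-1) ^ l * xi q (k + l) 0) :=
  stmt11_general p hp q hq hq1 n k
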